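/- arXiv:2307.06092 — 3 statements merged into one kernel-verified Lean document; each statement's English description precedes it below -/
import Mathlib

section
/- Let F be a real random variable and A ≥ 0 an integrable random variable such that, conditionally on A, F is centered Gaussian with variance A. Then for every continuously differentiable Lipschitz function f : ℝ → ℝ and every bounded measurable φ : [0,∞) → ℝ, one has E[F·f(F)·φ(A)] = E[A·f'(F)·φ(A)]. -/
open MeasureTheory ProbabilityTheory Real
open scoped NNReal ENNReal

/-!
Given `A = a`, the variable `F` is `𝓝(0, a)`, and for a Gaussian `X ~ 𝓝(μ, v)` Stein's identity
`E[(X - μ) f(X)] = v E[f'(X)]` is integration by parts against the density `p`, since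
`(x - μ) p(x) = -v p'(x)`. Disintegrating the joint law of `(A, F)` as `law(A) ⊗ 𝓝(0, A)` reduces the
theorem to this identity on each fibre. Integrability comes from `E[F²] = E[A] < ∞`: a Lipschitz `f`
keeps `f(F)` in `L²`, so `F f(F)` is integrable.
-/

lemma LipschitzWith.comp_memLp_of_isFiniteMeasure {α E F : Type*} [MeasurableSpace α]
    {μ : Measure α} [IsFiniteMeasure μ] [NormedAddCommGroup E] [NormedAddCommGroup F]
    {p : ℝ≥0∞} {K : ℝ≥0} {g : E → F} (hg : LipschitzWith K g) {f : α → E} (hf : MemLp f p μ) :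
    MemLp (fun x => g (f x)) p μ := by
  have h0 : MemLp (fun x => g (f x) - g 0) p μ :=
    (hg.sub (LipschitzWith.const (g 0))).comp_memLp (by simp) hf
  convert h0.add (memLp_const (g 0)) using 1
  ext; simp

lemma hasDerivAt_gaussianPDFReal (μ : ℝ) (v : ℝ≥0) (x : ℝ) :
    HasDerivAt (gaussianPDFReal μ v) (-((x - μ) / v) * gaussianPDFReal μ v x) x := by
  have hexponent : HasDerivAt (fun y => -(y - μ) ^ 2 / (2 * v)) (-((x - μ) / v)) x := by
    refine ((((hasDerivAt_id x).sub_const μ).pow 2).neg.div_const (2 * (v : ℝ))).congr_deriv ?_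
    simp only [id_eq]
    ring
  refine (hexponent.exp.const_mul (√(2 * π * v))⁻¹).congr_deriv ?_
  simp only [gaussianPDFReal]
  ring

lemma integrable_gaussianReal_iff {μ : ℝ} {v : ℝ≥0} (hv : v ≠ 0) {g : ℝ → ℝ} :
    Integrable g (gaussianReal μ v) ↔ Integrable (fun x => gaussianPDFReal μ v x * g x) := by
  rw [gaussianReal_of_var_ne_zero _ hv,
    integrable_withDensity_iff_integrable_smul' (measurable_gaussianPDF μ v)
      (ae_of_all _ fun _ => gaussianPDF_lt_top)]
  simp [toReal_gaussianPDF]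

/-- Stein's lemma. -/
theorem integral_sub_mul_gaussianReal {f : ℝ → ℝ} {L : ℝ≥0} (hd : Differentiable ℝ f)
    (hLip : LipschitzWith L f) (μ : ℝ) (v : ℝ≥0) :
    ∫ x, (x - μ) * f x ∂gaussianReal μ v = v * ∫ x, deriv f x ∂gaussianReal μ v := by
  rcases eq_or_ne v 0 with rfl | hv
  · simp [gaussianReal_zero_var]
  have hid : MemLp (fun x => x - μ) 2 (gaussianReal μ v) :=
    (memLp_id_gaussianReal 2).sub (memLp_const μ)
  have hfL2 : MemLp f 2 (gaussianReal μ v) :=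
    hLip.comp_memLp_of_isFiniteMeasure (memLp_id_gaussianReal 2)
  have hmul : Integrable (fun x => (x - μ) * f x) (gaussianReal μ v) := hid.integrable_mul hfL2
  have hf' : Integrable (deriv f) (gaussianReal μ v) :=
    .of_bound (measurable_deriv f).aestronglyMeasurable L
      (ae_of_all _ fun _ => norm_deriv_le_of_lipschitz hLip)
  have hfL1 : Integrable f (gaussianReal μ v) := hfL2.integrable one_le_two
  rw [integrable_gaussianReal_iff hv] at hmul hf' hfL1
  have hdensity : ∀ x, HasDerivAt (fun y => -(v : ℝ) * gaussianPDFReal μ v y)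
      ((x - μ) * gaussianPDFReal μ v x) x := fun x => by
    refine ((hasDerivAt_gaussianPDFReal μ v x).const_mul (-(v : ℝ))).congr_deriv ?_
    have : (v : ℝ) ≠ 0 := by exact_mod_cast hv
    field_simp
  have hibp := integral_mul_deriv_eq_deriv_mul_of_integrable (fun x _ => (hd x).hasDerivAt)
    (fun x _ => hdensity x) (by convert hmul using 2 with x; simp only [Pi.mul_apply]; ring)
    (by convert hf'.const_mul (-(v : ℝ)) using 2 with x; simp only [Pi.mul_apply]; ring)
    (by convert hfL1.const_mul (-(v : ℝ)) using 2 with x; simp only [Pi.mul_apply]; ring)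
  rw [integral_gaussianReal_eq_integral_smul hv, integral_gaussianReal_eq_integral_smul hv,
    ← integral_const_mul]
  convert hibp using 1
  · congr 1 with x; simp only [smul_eq_mul]; ring
  · rw [← integral_neg]; congr 1 with x; simp only [smul_eq_mul]; ring

lemma integral_sub_sq_gaussianReal (μ : ℝ) (v : ℝ≥0) :
    ∫ x, (x - μ) ^ 2 ∂gaussianReal μ v = v := by
  rw [← variance_fun_id_gaussianReal (μ := μ), variance_eq_integral aemeasurable_id',
    integral_id_gaussianReal]

noncomputable def centeredGaussianKernel : Kernel ℝ ℝ where
  toFun a := gaussianReal 0 a.toNNReal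
  measurable' := measurable_gaussianReal.comp (measurable_const.prodMk measurable_real_toNNReal)

@[simp]
lemma centeredGaussianKernel_apply (a : ℝ) :
    centeredGaussianKernel a = gaussianReal 0 a.toNNReal := rfl

instance : IsMarkovKernel centeredGaussianKernel :=
  ⟨fun a => by rw [centeredGaussianKernel_apply]; infer_instance⟩

lemma MeasureTheory.Measure.bind_map_prodMk_eq_compProd {α β : Type*} [MeasurableSpace α]
    [MeasurableSpace β] (μ : Measure α) [SFinite μ] (κ : Kernel α β) [IsSFiniteKernel κ] :
    μ.bind (fun a => (κ a).map (Prod.mk a)) = μ ⊗ₘ κ := by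
  rw [Measure.compProd_eq_comp_prod]
  congr with a : 1
  rw [Kernel.prod_apply, Kernel.id_apply, Measure.dirac_prod]

lemma integral_mul_centeredGaussianKernel {f : ℝ → ℝ} {L : ℝ≥0} (hd : Differentiable ℝ f)
    (hLip : LipschitzWith L f) {a : ℝ} (ha : 0 ≤ a) :
    ∫ x, x * f x ∂centeredGaussianKernel a = a * ∫ x, deriv f x ∂centeredGaussianKernel a := by
  simpa [Real.coe_toNNReal _ ha] using integral_sub_mul_gaussianReal hd hLip 0 a.toNNReal

lemma integral_comp_eq_integral_integral_of_map_eq_compProd {Ω α β E : Type*}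
    [MeasurableSpace Ω] [MeasurableSpace α] [MeasurableSpace β] [NormedAddCommGroup E]
    [NormedSpace ℝ E] {P : Measure Ω} {X : Ω → α × β} (hX : AEMeasurable X P) {μ : Measure α}
    [SFinite μ] {κ : Kernel α β} [IsSFiniteKernel κ] (hlaw : P.map X = μ ⊗ₘ κ)
    {g : α × β → E} (hg : AEStronglyMeasurable g (μ ⊗ₘ κ))
    (hint : Integrable (fun ω => g (X ω)) P) :
    ∫ ω, g (X ω) ∂P = ∫ a, ∫ b, g (a, b) ∂κ a ∂μ := by
  rw [← integral_map hX (hlaw ▸ hg), hlaw, Measure.integral_compProd]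
  rw [← hlaw] at hg ⊢
  exact (integrable_map_measure hg hX).2 hint

lemma memLp_two_of_map_eq_compProd_centeredGaussianKernel {Ω : Type*} [MeasurableSpace Ω]
    {P : Measure Ω} [IsProbabilityMeasure P] {A F : Ω → ℝ} (hA : Measurable A)
    (hF : Measurable F) (hAint : Integrable A P)
    (hlaw : P.map (fun ω => (A ω, F ω)) = P.map A ⊗ₘ centeredGaussianKernel) :
    MemLp F 2 P := by
  have hAF : AEMeasurable (fun ω => (A ω, F ω)) P := (hA.prodMk hF).aemeasurable
  have hsq : Integrable (fun z : ℝ × ℝ => z.2 ^ 2) (P.map A ⊗ₘ centeredGaussianKernel) := by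
    rw [Measure.integrable_compProd_iff (by fun_prop)]
    refine ⟨ae_of_all _ fun a => (memLp_id_gaussianReal 2).integrable_sq, ?_⟩
    have hsection : ∀ a : ℝ, ∫ x, ‖x ^ 2‖ ∂centeredGaussianKernel a = max a 0 := fun a => by
      simpa [← Real.coe_toNNReal'] using integral_sub_sq_gaussianReal 0 a.toNNReal
    simp_rw [hsection]
    exact ((integrable_map_measure aestronglyMeasurable_id hA.aemeasurable).2 hAint).pos_part
  rw [memLp_two_iff_integrable_sq hF.aestronglyMeasurable]
  exact (integrable_map_measure (hlaw ▸ hsq.aestronglyMeasurable) hAF).1 (hlaw ▸ hsq)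

theorem gaussian_mixture_integration_by_parts_general
    {Ω : Type*} [MeasurableSpace Ω] (P : Measure Ω) [IsProbabilityMeasure P]
    (F A : Ω → ℝ) (hFmeas : Measurable F) (hAmeas : Measurable A)
    (hApos : ∀ ω, 0 ≤ A ω) (hAint : Integrable A P)
    (hcond : P.map (fun ω => (A ω, F ω)) =
      (P.map A).bind (fun a => (gaussianReal 0 (Real.toNNReal a)).map (fun x => (a, x))))
    (f f' : ℝ → ℝ) (hf : ∀ x, HasDerivAt f (f' x) x)
    (L : NNReal) (hLip : LipschitzWith L f)
    (φ : ℝ → ℝ) (hφmeas : Measurable φ) (Cφ : ℝ) (hφbd : ∀ x, |φ x| ≤ Cφ) :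
    ∫ ω, F ω * f (F ω) * φ (A ω) ∂P = ∫ ω, A ω * f' (F ω) * φ (A ω) ∂P := by
  obtain rfl : f' = deriv f := funext fun x => (hf x).deriv.symm
  have hd : Differentiable ℝ f := fun x => (hf x).differentiableAt
  have hlaw : P.map (fun ω => (A ω, F ω)) = P.map A ⊗ₘ centeredGaussianKernel := by
    rw [hcond, ← Measure.bind_map_prodMk_eq_compProd]
    simp only [centeredGaussianKernel_apply]
  have hF : MemLp F 2 P :=
    memLp_two_of_map_eq_compProd_centeredGaussianKernel hAmeas hFmeas hAint hlaw
  have hφA : AEStronglyMeasurable (fun ω => φ (A ω)) P := (hφmeas.comp hAmeas).aestronglyMeasurable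
  have hφA_bdd : ∀ᵐ ω ∂P, ‖φ (A ω)‖ ≤ Cφ := ae_of_all _ fun ω => hφbd (A ω)
  have hlhs : Integrable (fun ω => F ω * f (F ω) * φ (A ω)) P :=
    (hF.integrable_mul (hLip.comp_memLp_of_isFiniteMeasure hF)).mul_bdd hφA hφA_bdd
  have hrhs : Integrable (fun ω => A ω * deriv f (F ω) * φ (A ω)) P :=
    (hAint.mul_bdd ((measurable_deriv f).comp hFmeas).aestronglyMeasurable
      (ae_of_all _ fun _ => norm_deriv_le_of_lipschitz hLip)).mul_bdd hφA hφA_bdd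
  have hAF : AEMeasurable (fun ω => (A ω, F ω)) P := (hAmeas.prodMk hFmeas).aemeasurable
  have := hd.continuous.measurable
  have := measurable_deriv f
  rw [integral_comp_eq_integral_integral_of_map_eq_compProd hAF hlaw
      (g := fun z => z.2 * f z.2 * φ z.1) (by fun_prop) hlhs,
    integral_comp_eq_integral_integral_of_map_eq_compProd hAF hlaw
      (g := fun z => z.1 * deriv f z.2 * φ z.1) (by fun_prop) hrhs]
  refine integral_congr_ae ?_
  filter_upwards [(ae_map_iff hAmeas.aemeasurable measurableSet_Ici).2 (ae_of_all _ hApos)]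
    with a ha
  simp only [integral_mul_const, integral_const_mul, integral_mul_centeredGaussianKernel hd hLip ha]

/-- **Gaussian variance mixture integration by parts.**
If, conditionally on `A ≥ 0`, the random variable `F` is centered Gaussian with variance `A`
(encoded via the disintegration of the joint law of `(A, F)`), then for every continuously
differentiable Lipschitz `f` and bounded measurable `φ`,
`E[F·f(F)·φ(A)] = E[A·f'(F)·φ(A)]`. -/
theorem gaussian_mixture_integration_by_parts
    {Ω : Type*} [MeasurableSpace Ω] (P : Measure Ω) [IsProbabilityMeasure P]
    (F A : Ω → ℝ) (hFmeas : Measurable F) (hAmeas : Measurable A)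
    (hApos : ∀ ω, 0 ≤ A ω) (hAint : Integrable A P)
    (hcond : P.map (fun ω => (A ω, F ω)) =
      (P.map A).bind (fun a => (gaussianReal 0 (Real.toNNReal a)).map (fun x => (a, x))))
    (f f' : ℝ → ℝ) (hf : ∀ x, HasDerivAt f (f' x) x)
    (hf'cont : Continuous f') (L : NNReal) (hLip : LipschitzWith L f)
    (φ : ℝ → ℝ) (hφmeas : Measurable φ) (Cφ : ℝ) (hφbd : ∀ x, |φ x| ≤ Cφ) :
    ∫ ω, F ω * f (F ω) * φ (A ω) ∂P = ∫ ω, A ω * f' (F ω) * φ (A ω) ∂P :=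
  gaussian_mixture_integration_by_parts_general P F A hFmeas hAmeas hApos hAint hcond f f' hf L hLip
    φ hφmeas Cφ hφbd
end

section
/- Let F be a centered random variable with variance σ² > 0 such that, conditionally on a square-integrable random variable A ≥ 0, F is centered Gaussian with variance A, and let Z ~ N(0, σ²). Then the total variation distance satisfies d_TV(F, Z) ≤ (8/σ⁴)·Var(A). -/
open MeasureTheory ProbabilityTheory

noncomputable def dTV (μ ν : Measure ℝ) : ℝ :=
  ⨆ s : {s : Set ℝ // MeasurableSet s}, |(μ s.1).toReal - (ν s.1).toReal|

/-!
For a Borel set `B` let `g(a) = N(0, a)(B)`, so that `P(F ∈ B) = E[g(A)]` and `P(Z ∈ B) = g(σ²)`.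
Differentiating the Gaussian density twice in its variance gives `|g''(a)| ≤ 3 / a²`, so Taylor's
formula bounds `|g(a) - g(σ²) - g'(σ²)(a - σ²)|` by `6/σ⁴ · (a - σ²)²` for `a ≥ σ²/2`; for
`0 ≤ a < σ²/2` the same quantity is at most `2 ≤ 8/σ⁴ · (a - σ²)²`, using `|g'(σ²)| ≤ 1/σ²`.
Taking expectations, the linear term vanishes because `E[A] = σ²`.
-/

open Real Set Filter

lemma integral_abs_sub_left (m a : ℝ) :
    ∫ t in m..a, |t - m| = (a - m) * |a - m| / 2 := by
  rw [intervalIntegral.integral_comp_sub_right (fun u => |u|), sub_self]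
  rcases le_total 0 (a - m) with h | h
  · rw [intervalIntegral.integral_congr (g := fun u => u) fun u hu => abs_of_nonneg ?_,
      integral_id, abs_of_nonneg h]
    · ring
    · exact (uIcc_of_le h ▸ hu).1
  · rw [intervalIntegral.integral_congr (g := fun u => -u) fun u hu => abs_of_nonpos ?_,
      intervalIntegral.integral_neg, integral_id, abs_of_nonpos h]
    · ring
    · exact (uIcc_of_ge h ▸ hu).2

theorem abs_sub_sub_deriv_mul_le {f f' f'' : ℝ → ℝ} {s : Set ℝ} {C m a : ℝ} (hs : Convex ℝ s)
    (hf : ∀ t ∈ s, HasDerivAt f (f' t) t) (hf' : ∀ t ∈ s, HasDerivAt f' (f'' t) t)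
    (hC : ∀ t ∈ s, |f'' t| ≤ C) (hm : m ∈ s) (ha : a ∈ s) :
    |f a - f m - f' m * (a - m)| ≤ C / 2 * (a - m) ^ 2 := by
  have hseg : uIcc m a ⊆ s := (convex_iff_ordConnected.mp hs).uIcc_subset hm ha
  have hlip : ∀ t ∈ s, ‖f' t - f' m‖ ≤ C * ‖t - m‖ := fun t ht =>
    hs.norm_image_sub_le_of_norm_hasDerivWithin_le (fun u hu => (hf' u hu).hasDerivWithinAt)
      hC hm ht
  have hint : IntervalIntegrable f' volume m a :=
    ContinuousOn.intervalIntegrable fun t ht => (hf' t (hseg ht)).continuousAt.continuousWithinAt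
  have hftc : f a - f m - f' m * (a - m) = ∫ t in m..a, (f' t - f' m) := by
    rw [intervalIntegral.integral_sub hint intervalIntegrable_const,
      intervalIntegral.integral_const, smul_eq_mul,
      intervalIntegral.integral_eq_sub_of_hasDerivAt (fun t ht => hf t (hseg ht)) hint]
    ring
  have hC0 : 0 ≤ C := (abs_nonneg _).trans (hC m hm)
  calc |f a - f m - f' m * (a - m)| = ‖∫ t in m..a, (f' t - f' m)‖ := by
        rw [hftc, Real.norm_eq_abs]
    _ ≤ |(∫ t in m..a, C * |t - m|)| := by
        refine intervalIntegral.norm_integral_le_abs_of_norm_le ?_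
          ((by fun_prop : Continuous fun t => C * |t - m|).intervalIntegrable (μ := volume) _ _)
        filter_upwards [ae_restrict_mem measurableSet_uIoc] with t ht
        exact hlip t (hseg (uIoc_subset_uIcc ht))
    _ = C / 2 * (a - m) ^ 2 := by
        rw [intervalIntegral.integral_const_mul, integral_abs_sub_left, abs_mul,
          abs_of_nonneg hC0, abs_div, abs_mul, abs_abs, ← sq, sq_abs, abs_two]
        ring

namespace GaussianMixture

variable {a x : ℝ}

noncomputable def gaussDensity (a x : ℝ) : ℝ := (√(2 * π * a))⁻¹ * exp (-(2 * a)⁻¹ * x ^ 2)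

-- `gaussDensity₁` and `gaussDensity₂` are the first two derivatives of `gaussDensity` in `a`.
noncomputable def gaussDensity₁ (a x : ℝ) : ℝ := (x ^ 2 - a) / (2 * a ^ 2) * gaussDensity a x

noncomputable def gaussDensity₂ (a x : ℝ) : ℝ :=
  (x ^ 4 - 6 * a * x ^ 2 + 3 * a ^ 2) / (4 * a ^ 4) * gaussDensity a x

lemma gaussDensity_nonneg (a x : ℝ) : 0 ≤ gaussDensity a x := by
  unfold gaussDensity; positivity

lemma continuous_gaussDensity (a : ℝ) : Continuous (gaussDensity a) := by
  unfold gaussDensity; fun_prop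

lemma gaussDensity_eq_gaussianPDFReal (ha : 0 < a) (x : ℝ) :
    gaussDensity a x = gaussianPDFReal 0 a.toNNReal x := by
  rw [gaussDensity, gaussianPDFReal, Real.coe_toNNReal _ ha.le, sub_zero, neg_div, div_eq_inv_mul,
    neg_mul]

lemma hasDerivAt_gaussDensity (ha : 0 < a) (x : ℝ) :
    HasDerivAt (fun t => gaussDensity t x) (gaussDensity₁ a x) a := by
  have hsqrt : HasDerivAt (fun t => (√(2 * π * t))⁻¹) (-(√(2 * π * a))⁻¹ / (2 * a)) a := by
    refine ((((hasDerivAt_id' a).const_mul (2 * π)).sqrt (by positivity)).inv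
      (by positivity)).congr_deriv ?_
    have hs : √(2 * π * a) ^ 2 = 2 * π * a := sq_sqrt (by positivity)
    field_simp
    rw [hs]
  have hexp : HasDerivAt (fun t => exp (-(2 * t)⁻¹ * x ^ 2))
      (exp (-(2 * a)⁻¹ * x ^ 2) * (x ^ 2 / (2 * a ^ 2))) a := by
    have e : (fun t : ℝ => exp (-(2 * t)⁻¹ * x ^ 2)) = fun t => exp (-(x ^ 2 / 2) * t⁻¹) := by
      funext t; ring_nf
    rw [e]
    exact (((hasDerivAt_inv ha.ne').const_mul _).exp).congr_deriv (by field_simp)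
  refine (hsqrt.mul hexp).congr_deriv ?_
  unfold gaussDensity₁ gaussDensity
  field_simp
  ring

lemma hasDerivAt_gaussDensity₁ (ha : 0 < a) (x : ℝ) :
    HasDerivAt (fun t => gaussDensity₁ t x) (gaussDensity₂ a x) a := by
  have hq : HasDerivAt (fun t => (x ^ 2 - t) / (2 * t ^ 2))
      ((-(2 * a ^ 2) - (x ^ 2 - a) * (4 * a)) / (2 * a ^ 2) ^ 2) a := by
    refine (((hasDerivAt_id' a).const_sub (x ^ 2)).div
      ((hasDerivAt_pow 2 a).const_mul 2) (by positivity)).congr_deriv ?_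
    ring
  refine (hq.mul (hasDerivAt_gaussDensity ha x)).congr_deriv ?_
  unfold gaussDensity₂ gaussDensity₁
  field_simp
  ring

lemma continuous_gaussDensity₁ (a : ℝ) : Continuous (gaussDensity₁ a) := by
  unfold gaussDensity₁; have := continuous_gaussDensity a; fun_prop

lemma continuous_gaussDensity₂ (a : ℝ) : Continuous (gaussDensity₂ a) := by
  unfold gaussDensity₂; have := continuous_gaussDensity a; fun_prop

lemma integrable_pow_mul_gaussDensity (ha : 0 < a) (n : ℕ) :
    Integrable fun x => x ^ n * gaussDensity a x := by
  have h := (integrable_rpow_mul_exp_neg_mul_sq (b := (2 * a)⁻¹) (by positivity)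
    (s := n) (by linarith [n.cast_nonneg (α := ℝ)])).const_mul (√(2 * π * a))⁻¹
  refine h.congr (ae_of_all _ fun x => ?_)
  simp only [rpow_natCast, gaussDensity]; ring

lemma integrable_poly_mul_gaussDensity (ha : 0 < a) (c₀ c₂ c₄ : ℝ) :
    Integrable fun x => (c₀ + c₂ * x ^ 2 + c₄ * x ^ 4) * gaussDensity a x := by
  have h := (((integrable_pow_mul_gaussDensity ha 0).const_mul c₀).add
    ((integrable_pow_mul_gaussDensity ha 2).const_mul c₂)).add
    ((integrable_pow_mul_gaussDensity ha 4).const_mul c₄)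
  refine h.congr (ae_of_all _ fun x => ?_)
  simp only [Pi.add_apply]; ring

lemma integral_gaussDensity (ha : 0 < a) : ∫ x, gaussDensity a x = 1 := by
  simp_rw [gaussDensity_eq_gaussianPDFReal ha]
  exact integral_gaussianPDFReal_eq_one 0 (by simpa using ha)

lemma gaussDensity_le {s t u : ℝ} (hs : 0 < s) (hst : s ≤ t) (htu : t ≤ u) (x : ℝ) :
    gaussDensity t x ≤ √(u / s) * gaussDensity u x := by
  have ht : 0 < t := hs.trans_le hst
  have hu : 0 < u := ht.trans_le htu
  have hc : √(u / s) * (√(2 * π * u))⁻¹ = (√(2 * π * s))⁻¹ := by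
    rw [show 2 * π * u = u / s * (2 * π * s) by field_simp, sqrt_mul (by positivity), mul_inv,
      ← mul_assoc, mul_inv_cancel₀ (by positivity), one_mul]
  rw [gaussDensity, gaussDensity, ← mul_assoc, hc]
  gcongr

lemma abs_gaussDensity₁_le (ha : 0 < a) (x : ℝ) :
    |gaussDensity₁ a x| ≤ (a + x ^ 2) / (2 * a ^ 2) * gaussDensity a x := by
  rw [gaussDensity₁, abs_mul, abs_of_nonneg (gaussDensity_nonneg a x), abs_div,
    abs_of_pos (by positivity : (0 : ℝ) < 2 * a ^ 2)]
  gcongr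
  · exact gaussDensity_nonneg a x
  · exact abs_le.mpr ⟨by linarith [sq_nonneg x], by linarith⟩

lemma abs_gaussDensity₂_le (ha : 0 < a) (x : ℝ) :
    |gaussDensity₂ a x| ≤ (3 * a ^ 2 + 6 * a * x ^ 2 + x ^ 4) / (4 * a ^ 4) * gaussDensity a x := by
  rw [gaussDensity₂, abs_mul, abs_of_nonneg (gaussDensity_nonneg a x), abs_div,
    abs_of_pos (by positivity : (0 : ℝ) < 4 * a ^ 4)]
  gcongr
  · exact gaussDensity_nonneg a x
  · have : 0 ≤ a * x ^ 2 := by positivity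
    exact abs_le.mpr ⟨by nlinarith [pow_two_nonneg (x ^ 2), sq_nonneg a], by nlinarith⟩

lemma integrable_gaussDensity (ha : 0 < a) : Integrable (gaussDensity a) := by
  simpa using integrable_pow_mul_gaussDensity ha 0

lemma integrable_gaussDensity₁ (ha : 0 < a) : Integrable (gaussDensity₁ a) :=
  (integrable_poly_mul_gaussDensity ha (-a / (2 * a ^ 2)) (1 / (2 * a ^ 2)) 0).congr
    (ae_of_all _ fun x => by rw [gaussDensity₁]; ring)

lemma integrable_gaussDensity₂ (ha : 0 < a) : Integrable (gaussDensity₂ a) :=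
  (integrable_poly_mul_gaussDensity ha (3 * a ^ 2 / (4 * a ^ 4)) (-6 * a / (4 * a ^ 4))
    (1 / (4 * a ^ 4))).congr (ae_of_all _ fun x => by rw [gaussDensity₂]; ring)

lemma mem_Icc_of_mem_ball_half {t : ℝ} (ht : t ∈ Metric.ball a (a / 2)) :
    t ∈ Icc (a / 2) (3 * a / 2) := by
  rw [Real.ball_eq_Ioo, mem_Ioo] at ht
  constructor <;> linarith

lemma hasDerivAt_setIntegral_gaussDensity (ha : 0 < a) (B : Set ℝ) :
    HasDerivAt (fun t => ∫ x in B, gaussDensity t x) (∫ x in B, gaussDensity₁ a x) a := by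
  set K := √((3 * a / 2) / (a / 2))
  have hbound : ∀ x, ∀ t ∈ Metric.ball a (a / 2), ‖gaussDensity₁ t x‖ ≤
      K * ((2 * a + x ^ 2) / (a ^ 2 / 2) * gaussDensity (3 * a / 2) x) := by
    intro x t ht
    obtain ⟨ht₁, ht₂⟩ := mem_Icc_of_mem_ball_half ht
    have ht₀ : 0 < t := by linarith
    calc ‖gaussDensity₁ t x‖ ≤ (t + x ^ 2) / (2 * t ^ 2) * gaussDensity t x :=
          abs_gaussDensity₁_le ht₀ x
      _ ≤ (2 * a + x ^ 2) / (a ^ 2 / 2) * (K * gaussDensity (3 * a / 2) x) :=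
          mul_le_mul (div_le_div₀ (by positivity) (by linarith) (by positivity) (by nlinarith))
            (gaussDensity_le (half_pos ha) ht₁ ht₂ x) (gaussDensity_nonneg t x) (by positivity)
      _ = _ := by ring
  have hint : Integrable fun x =>
      K * ((2 * a + x ^ 2) / (a ^ 2 / 2) * gaussDensity (3 * a / 2) x) :=
    ((integrable_poly_mul_gaussDensity (a := 3 * a / 2) (by positivity) (2 * a / (a ^ 2 / 2))
      (1 / (a ^ 2 / 2)) 0).const_mul K).congr (ae_of_all _ fun x => by ring)
  exact (hasDerivAt_integral_of_dominated_loc_of_deriv_le (Metric.ball_mem_nhds a (half_pos ha))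
    (Eventually.of_forall fun t => (continuous_gaussDensity t).aestronglyMeasurable)
    (integrable_gaussDensity ha).integrableOn (continuous_gaussDensity₁ a).aestronglyMeasurable
    (ae_of_all _ hbound) hint.integrableOn (ae_of_all _ fun x t ht => hasDerivAt_gaussDensity
      (by linarith [(mem_Icc_of_mem_ball_half ht).1]) x)).2

lemma hasDerivAt_setIntegral_gaussDensity₁ (ha : 0 < a) (B : Set ℝ) :
    HasDerivAt (fun t => ∫ x in B, gaussDensity₁ t x) (∫ x in B, gaussDensity₂ a x) a := by
  set K := √((3 * a / 2) / (a / 2))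
  have hbound : ∀ x, ∀ t ∈ Metric.ball a (a / 2), ‖gaussDensity₂ t x‖ ≤
      K * ((7 * a ^ 2 + 9 * a * x ^ 2 + x ^ 4) / (a ^ 4 / 4) * gaussDensity (3 * a / 2) x) := by
    intro x t ht
    obtain ⟨ht₁, ht₂⟩ := mem_Icc_of_mem_ball_half ht
    have ht₀ : 0 < t := by linarith
    have hnum : 3 * t ^ 2 + 6 * t * x ^ 2 + x ^ 4 ≤ 7 * a ^ 2 + 9 * a * x ^ 2 + x ^ 4 := by
      nlinarith [sq_nonneg x]
    have hden : a ^ 4 / 4 ≤ 4 * t ^ 4 := by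
      nlinarith [pow_le_pow_left₀ (by positivity) ht₁ 4]
    calc ‖gaussDensity₂ t x‖
        ≤ (3 * t ^ 2 + 6 * t * x ^ 2 + x ^ 4) / (4 * t ^ 4) * gaussDensity t x :=
          abs_gaussDensity₂_le ht₀ x
      _ ≤ (7 * a ^ 2 + 9 * a * x ^ 2 + x ^ 4) / (a ^ 4 / 4) * (K * gaussDensity (3 * a / 2) x) :=
          mul_le_mul (div_le_div₀ (by positivity) hnum (by positivity) hden)
            (gaussDensity_le (half_pos ha) ht₁ ht₂ x) (gaussDensity_nonneg t x) (by positivity)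
      _ = _ := by ring
  have hint : Integrable fun x =>
      K * ((7 * a ^ 2 + 9 * a * x ^ 2 + x ^ 4) / (a ^ 4 / 4) * gaussDensity (3 * a / 2) x) :=
    ((integrable_poly_mul_gaussDensity (a := 3 * a / 2) (by positivity) (7 * a ^ 2 / (a ^ 4 / 4))
      (9 * a / (a ^ 4 / 4)) (1 / (a ^ 4 / 4))).const_mul K).congr (ae_of_all _ fun x => by ring)
  exact (hasDerivAt_integral_of_dominated_loc_of_deriv_le (Metric.ball_mem_nhds a (half_pos ha))
    (Eventually.of_forall fun t => (continuous_gaussDensity₁ t).aestronglyMeasurable)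
    (integrable_gaussDensity₁ ha).integrableOn (continuous_gaussDensity₂ a).aestronglyMeasurable
    (ae_of_all _ hbound) hint.integrableOn (ae_of_all _ fun x t ht => hasDerivAt_gaussDensity₁
      (by linarith [(mem_Icc_of_mem_ball_half ht).1]) x)).2

lemma integral_gaussDensity₁ (ha : 0 < a) : ∫ x, gaussDensity₁ a x = 0 := by
  have h := hasDerivAt_setIntegral_gaussDensity ha univ
  rw [Measure.restrict_univ] at h
  refine h.unique ((hasDerivAt_const a (1 : ℝ)).congr_of_eventuallyEq ?_)
  filter_upwards [lt_mem_nhds ha] with t ht using integral_gaussDensity ht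

lemma integral_gaussDensity₂ (ha : 0 < a) : ∫ x, gaussDensity₂ a x = 0 := by
  have h := hasDerivAt_setIntegral_gaussDensity₁ ha univ
  rw [Measure.restrict_univ] at h
  refine h.unique ((hasDerivAt_const a (0 : ℝ)).congr_of_eventuallyEq ?_)
  filter_upwards [lt_mem_nhds ha] with t ht using integral_gaussDensity₁ ht

-- The second and fourth moments are read off from `∫ gaussDensity₁ = ∫ gaussDensity₂ = 0`.
lemma integral_poly_mul_gaussDensity (ha : 0 < a) (c₀ c₂ c₄ : ℝ) :
    ∫ x, (c₀ + c₂ * x ^ 2 + c₄ * x ^ 4) * gaussDensity a x = c₀ + c₂ * a + 3 * c₄ * a ^ 2 := by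
  set M₂ := ∫ x, x ^ 2 * gaussDensity a x
  set M₄ := ∫ x, x ^ 4 * gaussDensity a x
  have hlin : ∀ c₀ c₂ c₄ : ℝ,
      ∫ x, (c₀ + c₂ * x ^ 2 + c₄ * x ^ 4) * gaussDensity a x = c₀ + c₂ * M₂ + c₄ * M₄ := by
    intro c₀ c₂ c₄
    have h₀ := (integrable_gaussDensity ha).const_mul c₀
    have h₂ := (integrable_pow_mul_gaussDensity ha 2).const_mul c₂
    have h₄ := (integrable_pow_mul_gaussDensity ha 4).const_mul c₄
    simp_rw [add_mul, mul_assoc]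
    rw [integral_add (h₀.fun_add h₂) h₄, integral_add h₀ h₂, integral_const_mul, integral_const_mul,
      integral_const_mul, integral_gaussDensity ha, mul_one]
  have hM₂ : M₂ = a := by
    have h := integral_gaussDensity₁ ha
    rw [show gaussDensity₁ a = fun x => (-a / (2 * a ^ 2) + 1 / (2 * a ^ 2) * x ^ 2 + 0 * x ^ 4) *
      gaussDensity a x from funext fun x => by rw [gaussDensity₁]; ring, hlin] at h
    field_simp at h
    linarith
  have hM₄ : M₄ = 3 * a ^ 2 := by
    have h := integral_gaussDensity₂ ha
    rw [show gaussDensity₂ a = fun x => (3 * a ^ 2 / (4 * a ^ 4) + -6 * a / (4 * a ^ 4) * x ^ 2 +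
      1 / (4 * a ^ 4) * x ^ 4) * gaussDensity a x from funext fun x => by rw [gaussDensity₂]; ring,
      hlin, hM₂] at h
    field_simp at h
    linarith
  rw [hlin, hM₂, hM₄]
  ring

lemma abs_setIntegral_gaussDensity₁_le (ha : 0 < a) (B : Set ℝ) :
    |∫ x in B, gaussDensity₁ a x| ≤ 1 / a :=
  calc |∫ x in B, gaussDensity₁ a x| ≤ ∫ x in B, |gaussDensity₁ a x| := abs_integral_le_integral_abs
    _ ≤ ∫ x, |gaussDensity₁ a x| := setIntegral_le_integral (integrable_gaussDensity₁ ha).abs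
          (ae_of_all _ fun _ => abs_nonneg _)
    _ ≤ ∫ x, (a / (2 * a ^ 2) + 1 / (2 * a ^ 2) * x ^ 2 + 0 * x ^ 4) * gaussDensity a x :=
          integral_mono (integrable_gaussDensity₁ ha).abs
            (integrable_poly_mul_gaussDensity ha _ _ _)
            fun x => (abs_gaussDensity₁_le ha x).trans_eq (by ring)
    _ = 1 / a := by rw [integral_poly_mul_gaussDensity ha]; field_simp; ring

lemma abs_setIntegral_gaussDensity₂_le (ha : 0 < a) (B : Set ℝ) :
    |∫ x in B, gaussDensity₂ a x| ≤ 3 / a ^ 2 :=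
  calc |∫ x in B, gaussDensity₂ a x| ≤ ∫ x in B, |gaussDensity₂ a x| := abs_integral_le_integral_abs
    _ ≤ ∫ x, |gaussDensity₂ a x| := setIntegral_le_integral (integrable_gaussDensity₂ ha).abs
          (ae_of_all _ fun _ => abs_nonneg _)
    _ ≤ ∫ x, (3 * a ^ 2 / (4 * a ^ 4) + 6 * a / (4 * a ^ 4) * x ^ 2 + 1 / (4 * a ^ 4) * x ^ 4) *
          gaussDensity a x :=
          integral_mono (integrable_gaussDensity₂ ha).abs
            (integrable_poly_mul_gaussDensity ha _ _ _)
            fun x => (abs_gaussDensity₂_le ha x).trans_eq (by ring)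
    _ = 3 / a ^ 2 := by rw [integral_poly_mul_gaussDensity ha]; field_simp; ring

noncomputable def centeredGaussianKernel : Kernel ℝ ℝ where
  toFun a := gaussianReal 0 a.toNNReal
  measurable' := by fun_prop

lemma centeredGaussianKernel_apply (a : ℝ) :
    centeredGaussianKernel a = gaussianReal 0 a.toNNReal := rfl

instance : IsMarkovKernel centeredGaussianKernel :=
  ⟨fun a => inferInstanceAs (IsProbabilityMeasure (gaussianReal 0 a.toNNReal))⟩

lemma centeredGaussianKernel_real_apply (ha : 0 < a) (B : Set ℝ) :
    (centeredGaussianKernel a).real B = ∫ x in B, gaussDensity a x := by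
  rw [measureReal_def, centeredGaussianKernel_apply,
    gaussianReal_apply_eq_integral 0 (by simpa using ha),
    ENNReal.toReal_ofReal (integral_nonneg fun x => gaussianPDFReal_nonneg _ _ x)]
  simp_rw [gaussDensity_eq_gaussianPDFReal ha]

theorem abs_centeredGaussianKernel_real_sub_le (B : Set ℝ) {m : ℝ} (hm : 0 < m) (ha : 0 ≤ a) :
    |(centeredGaussianKernel a).real B - (centeredGaussianKernel m).real B -
      (∫ x in B, gaussDensity₁ m x) * (a - m)| ≤ 8 / m ^ 2 * (a - m) ^ 2 := by
  rcases le_or_gt (m / 2) a with hma | hma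
  · rw [centeredGaussianKernel_real_apply (by linarith) B, centeredGaussianKernel_real_apply hm B]
    have hpos : ∀ t ∈ Ici (m / 2), 0 < t := fun t ht => by linarith [mem_Ici.mp ht]
    have hbound : ∀ t ∈ Ici (m / 2), |∫ x in B, gaussDensity₂ t x| ≤ 12 / m ^ 2 := fun t ht =>
      (abs_setIntegral_gaussDensity₂_le (hpos t ht) B).trans <| by
        rw [div_le_div_iff₀ (pow_pos (hpos t ht) 2) (by positivity)]
        nlinarith [mem_Ici.mp ht]
    calc _ ≤ 12 / m ^ 2 / 2 * (a - m) ^ 2 :=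
          abs_sub_sub_deriv_mul_le (convex_Ici (m / 2))
            (fun t ht => hasDerivAt_setIntegral_gaussDensity (hpos t ht) B)
            (fun t ht => hasDerivAt_setIntegral_gaussDensity₁ (hpos t ht) B) hbound
            (by rw [mem_Ici]; linarith) hma
      _ = 6 / m ^ 2 * (a - m) ^ 2 := by ring
      _ ≤ 8 / m ^ 2 * (a - m) ^ 2 := by gcongr; norm_num
  · have hG : |(centeredGaussianKernel a).real B - (centeredGaussianKernel m).real B| ≤ 1 :=
      abs_sub_le_of_nonneg_of_le measureReal_nonneg measureReal_le_one measureReal_nonneg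
        measureReal_le_one
    have hL : |(∫ x in B, gaussDensity₁ m x) * (a - m)| ≤ 1 :=
      calc _ = |∫ x in B, gaussDensity₁ m x| * |a - m| := abs_mul _ _
        _ ≤ 1 / m * m := mul_le_mul (abs_setIntegral_gaussDensity₁_le hm B)
            (abs_le.mpr ⟨by linarith, by linarith⟩) (abs_nonneg _) (by positivity)
        _ = 1 := by field_simp
    calc _ ≤ 2 := (abs_sub _ _).trans (by linarith)
      _ ≤ 8 / m ^ 2 * (a - m) ^ 2 := by
        rw [div_mul_eq_mul_div, le_div_iff₀ (by positivity)]
        nlinarith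

end GaussianMixture

section Mixture

variable {Ω α β : Type*} [MeasurableSpace Ω] [MeasurableSpace α] [MeasurableSpace β]
  {P : Measure Ω} {X : Ω → α} {Y : Ω → β} {B : Set β}

lemma map_apply_eq_lintegral_of_map_prodMk_eq_bind (hX : Measurable X) (hY : Measurable Y)
    (κ : Kernel α β) [IsSFiniteKernel κ]
    (h : P.map (fun ω => (X ω, Y ω)) = (P.map X).bind fun a => (κ a).map (Prod.mk a))
    (hB : MeasurableSet B) :
    P.map Y B = ∫⁻ ω, κ (X ω) B ∂P := by
  have hκ : (fun a => (κ a).map (Prod.mk a)) = ⇑(Kernel.id ×ₖ κ) := by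
    ext1 a
    rw [Kernel.prod_apply, Kernel.id_apply, Measure.dirac_prod]
  have hmapY : P.map Y = (P.map fun ω => (X ω, Y ω)).map Prod.snd := by
    rw [Measure.map_map measurable_snd (hX.prodMk hY)]
    rfl
  rw [hmapY, h, Measure.map_apply measurable_snd hB,
    Measure.bind_apply (measurable_snd hB) (hκ ▸ (Kernel.id ×ₖ κ).measurable.aemeasurable),
    ← lintegral_map (κ.measurable_coe hB) hX]
  refine lintegral_congr fun a => ?_
  rw [Measure.map_apply measurable_prodMk_left (measurable_snd hB)]
  rfl

lemma measureReal_map_eq_integral_of_map_prodMk_eq_bind (hX : Measurable X) (hY : Measurable Y)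
    (κ : Kernel α β) [IsMarkovKernel κ]
    (h : P.map (fun ω => (X ω, Y ω)) = (P.map X).bind fun a => (κ a).map (Prod.mk a))
    (hB : MeasurableSet B) :
    (P.map Y).real B = ∫ ω, (κ (X ω)).real B ∂P := by
  rw [measureReal_def, map_apply_eq_lintegral_of_map_prodMk_eq_bind hX hY κ h hB,
    ← integral_toReal (f := fun ω => κ (X ω) B) ((κ.measurable_coe hB).comp hX).aemeasurable
      (ae_of_all _ fun ω => measure_lt_top _ _)]
  rfl

lemma integrable_measureReal_kernel_comp [IsFiniteMeasure P] (κ : Kernel α β) [IsMarkovKernel κ]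
    (hX : Measurable X) (hB : MeasurableSet B) :
    Integrable (fun ω => (κ (X ω)).real B) P :=
  (integrable_const (1 : ℝ)).mono'
    ((κ.measurable_coe hB).ennreal_toReal.comp hX).aestronglyMeasurable
    (ae_of_all _ fun ω => by
      rw [Real.norm_eq_abs, abs_of_nonneg measureReal_nonneg]
      exact measureReal_le_one)

end Mixture

lemma abs_integral_comp_sub_le_mul_variance {Ω : Type*} [MeasurableSpace Ω] {P : Measure Ω}
    [IsProbabilityMeasure P] {A : Ω → ℝ} (hA : MemLp A 2 P) {g : ℝ → ℝ} {L C : ℝ}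
    (hg : Integrable (fun ω => g (A ω)) P)
    (h : ∀ ω, |g (A ω) - g P[A] - L * (A ω - P[A])| ≤ C * (A ω - P[A]) ^ 2) :
    |∫ ω, g (A ω) ∂P - g P[A]| ≤ C * variance A P := by
  have hA₁ : Integrable A P := hA.integrable one_le_two
  have hlin : Integrable (fun ω => L * (A ω - P[A])) P := (hA₁.sub (integrable_const _)).const_mul L
  have hsq : Integrable (fun ω => (A ω - P[A]) ^ 2) P := (hA.sub (memLp_const P[A])).integrable_sq
  have hg' : Integrable (fun ω => g (A ω) - g P[A]) P := hg.sub (integrable_const _)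
  have hcentered : ∫ ω, L * (A ω - P[A]) ∂P = 0 := by
    rw [integral_const_mul, integral_sub hA₁ (integrable_const _)]
    simp
  calc |∫ ω, g (A ω) ∂P - g P[A]| = |∫ ω, (g (A ω) - g P[A] - L * (A ω - P[A])) ∂P| := by
        rw [integral_sub hg' hlin, hcentered, sub_zero,
          integral_sub hg (integrable_const _)]
        simp
    _ ≤ ∫ ω, |g (A ω) - g P[A] - L * (A ω - P[A])| ∂P := abs_integral_le_integral_abs
    _ ≤ ∫ ω, C * (A ω - P[A]) ^ 2 ∂P :=
        integral_mono (hg'.sub hlin).abs (hsq.const_mul C) h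
    _ = C * variance A P := by rw [integral_const_mul, variance_eq_integral hA.aemeasurable]

/-- **Total variation bound for Gaussian variance mixtures.**
If conditionally on the square-integrable `A ≥ 0` the variable `F` is centered Gaussian with
variance `A`, `σ² = E[A] > 0` and `Z ~ N(0, σ²)`, then `d_TV(F, Z) ≤ (8/σ⁴)·Var(A)`. -/
theorem dTV_gaussian_mixture_le
    {Ω : Type*} [MeasurableSpace Ω] (P : Measure Ω) [IsProbabilityMeasure P]
    (F A : Ω → ℝ) (hFmeas : Measurable F) (hAmeas : Measurable A)
    (hApos : ∀ ω, 0 ≤ A ω) (hA2 : MemLp A 2 P)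
    (hσpos : 0 < ∫ ω, A ω ∂P)
    (hcond : P.map (fun ω => (A ω, F ω)) =
      (P.map A).bind (fun a => (gaussianReal 0 (Real.toNNReal a)).map (fun x => (a, x)))) :
    dTV (P.map F) (gaussianReal 0 (Real.toNNReal (∫ ω, A ω ∂P))) ≤
      8 / (∫ ω, A ω ∂P) ^ 2 * variance A P := by
  refine ciSup_le fun ⟨B, hB⟩ => ?_
  let κ := GaussianMixture.centeredGaussianKernel
  have hmix : (P.map F).real B = ∫ ω, (κ (A ω)).real B ∂P :=
    measureReal_map_eq_integral_of_map_prodMk_eq_bind hAmeas hFmeas κ hcond hB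
  show |(P.map F).real B - (κ (∫ ω, A ω ∂P)).real B| ≤ _
  rw [hmix]
  exact abs_integral_comp_sub_le_mul_variance (g := fun a => (κ a).real B) hA2
    (integrable_measureReal_kernel_comp κ hAmeas hB)
    fun ω => GaussianMixture.abs_centeredGaussianKernel_real_sub_le B hσpos (hApos ω)
end

section
/- Let S₁ and S₂ be positive self-adjoint trace-class operators on a separable Hilbert space. Then ‖√S₁ − √S₂‖_HS ≤ |Tr(S₁) − Tr(S₂)|^{1/2} + √2·‖S₁ − S₂‖_HS^{1/4}·min{Tr(√S₁), Tr(√S₂)}^{1/2}. -/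
/-!
Write `T = √S₁ - √S₂`. Expanding `‖T eₙ‖²` against `√S₁ eₙ` gives
`‖T‖²_HS = 2 Tr (T √S₁) - (Tr S₁ - Tr S₂)`, and symmetrically with `√S₂`, so
`‖T‖²_HS ≤ |Tr S₁ - Tr S₂| + 2 |Tr (T √Sᵢ)|` for `i = 1, 2`.

For positive `R`, `|Tr (T R)| ≤ ‖T‖ Tr R`: on a finite square corner of the basis the Gram
matrix `⟪R eᵢ, eⱼ⟫` factors as `Cᵀ C`, which rewrites the corner sum as `∑ₗ ⟪T xₗ, xₗ⟫` with
`∑ₗ ‖xₗ‖²` the corner trace of `R`.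

Finally `‖T‖² ≤ ‖S₁ - S₂‖ ≤ ‖S₁ - S₂‖_HS`. If `λ = ⟪T y, y⟫` is close to `±‖T‖` for a unit
vector `y`, then `y` is an approximate eigenvector of `T`, and `S₁ - S₂ = √S₁ T + T √S₂` makes
`⟪(S₁ - S₂) y, y⟫` close to `λ (⟪√S₁ y, y⟫ + ⟪√S₂ y, y⟫)`, whose modulus is at least `λ²`.
-/

open MeasureTheory
open scoped RealInnerProductSpace

variable {H : Type*} [NormedAddCommGroup H] [InnerProductSpace ℝ H] [CompleteSpace H]

/-- Trace of an operator computed in the Hilbert basis `b`. -/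
noncomputable def opTrace (b : HilbertBasis ℕ ℝ H) (T : H →L[ℝ] H) : ℝ :=
  ∑' n, ⟪T (b n), b n⟫

/-- Hilbert–Schmidt norm of an operator computed in the Hilbert basis `b`. -/
noncomputable def opHSNorm (b : HilbertBasis ℕ ℝ H) (T : H →L[ℝ] H) : ℝ :=
  Real.sqrt (∑' n, ‖T (b n)‖ ^ 2)

section

variable {E : Type*} [NormedAddCommGroup E] [InnerProductSpace ℝ E]

namespace ContinuousLinearMap

theorem abs_inner_apply_self_le (T : E →L[ℝ] E) (x : E) : |⟪T x, x⟫| ≤ ‖T‖ * ‖x‖ ^ 2 :=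
  (abs_real_inner_le_norm _ _).trans <| by
    rw [sq, ← mul_assoc]
    exact mul_le_mul_of_nonneg_right (T.le_opNorm x) (norm_nonneg x)

theorem IsPositive.inner_comp_self_apply {R : E →L[ℝ] E} (hR : R.IsPositive) (x : E) :
    ⟪(R ∘L R) x, x⟫ = ‖R x‖ ^ 2 := by
  rw [comp_apply, hR.inner_left_eq_inner_right, real_inner_self_eq_norm_sq]

theorem norm_sub_inner_smul_self_sq (T : E →L[ℝ] E) {y : E} (hy : ‖y‖ = 1) :
    ‖T y - ⟪T y, y⟫ • y‖ ^ 2 = ‖T y‖ ^ 2 - ⟪T y, y⟫ ^ 2 := by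
  rw [norm_sub_sq_real, inner_smul_right, norm_smul, hy, Real.norm_eq_abs]
  ring_nf
  rw [sq_abs]
  ring

theorem sq_inner_sub_apply_self_le {A B : E →L[ℝ] E} (hA : A.IsPositive) (hB : B.IsPositive)
    {y : E} (hy : ‖y‖ = 1) :
    ⟪(A - B) y, y⟫ ^ 2 ≤
      ‖A ∘L A - B ∘L B‖ + (‖A‖ + ‖B‖) * √(‖A - B‖ ^ 2 - ⟪(A - B) y, y⟫ ^ 2) := by
  set T := A - B
  set l := ⟪T y, y⟫
  set d := T y - l • y
  set s := ⟪A y, y⟫ + ⟪B y, y⟫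
  have hd : ‖d‖ ≤ √(‖T‖ ^ 2 - l ^ 2) := by
    refine Real.le_sqrt_of_sq_le ?_
    rw [norm_sub_inner_smul_self_sq T hy]
    have := (T.le_opNorm y).trans_eq (by rw [hy, mul_one])
    nlinarith [norm_nonneg (T y)]
  have hAy := hA.inner_nonneg_left y
  have hBy := hB.inner_nonneg_left y
  have hl : |l| ≤ s := by
    rw [abs_le]
    constructor <;> simp only [l, T, s, sub_apply, inner_sub_left] <;> linarith
  -- `A ∘L A - B ∘L B = A ∘L T + T ∘L B` and `T y = l • y + d`
  have hdecomp : l * s = ⟪(A ∘L A - B ∘L B) y, y⟫ - ⟪d, A y⟫ - ⟪B y, d⟫ := by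
    simp only [d, T, l, s, sub_apply, comp_apply, inner_sub_left, inner_sub_right,
      real_inner_smul_left, real_inner_smul_right]
    rw [hA.inner_left_eq_inner_right (A y), hB.inner_left_eq_inner_right (B y),
      real_inner_comm (A y) y]
    ring
  have hrhs : |l * s| ≤ ‖A ∘L A - B ∘L B‖ + (‖A‖ + ‖B‖) * ‖d‖ := by
    have hdA : |⟪d, A y⟫| ≤ ‖d‖ * ‖A‖ :=
      (abs_real_inner_le_norm _ _).trans (by gcongr; simpa [hy] using A.le_opNorm y)
    have hdB : |⟪B y, d⟫| ≤ ‖B‖ * ‖d‖ :=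
      (abs_real_inner_le_norm _ _).trans (by gcongr; simpa [hy] using B.le_opNorm y)
    have hS : |⟪(A ∘L A - B ∘L B) y, y⟫| ≤ ‖A ∘L A - B ∘L B‖ := by
      simpa [hy] using (A ∘L A - B ∘L B).abs_inner_apply_self_le y
    rw [hdecomp]
    refine (abs_sub _ _).trans ((add_le_add_left (abs_sub _ _) _).trans ?_)
    linarith
  calc l ^ 2 ≤ |l * s| := by
        rw [abs_mul, abs_of_nonneg (by linarith : 0 ≤ s), sq, ← abs_mul_abs_self]
        exact mul_le_mul_of_nonneg_left hl (abs_nonneg l)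
    _ ≤ _ := hrhs.trans (by gcongr)

theorem sq_norm_sub_le_norm_comp_self_sub {A B : E →L[ℝ] E} (hA : A.IsPositive)
    (hB : B.IsPositive) : ‖A - B‖ ^ 2 ≤ ‖A ∘L A - B ∘L B‖ := by
  set T := A - B
  set V := ‖A ∘L A - B ∘L B‖
  set K := ‖A‖ + ‖B‖
  have hK : 0 ≤ K := by positivity
  let bound : Set ℝ := {t | t ^ 2 ≤ V + K * √(‖T‖ ^ 2 - t ^ 2)}
  have hclosed : IsClosed bound := isClosed_le (by fun_prop) (by fun_prop)
  have hrange : Set.range (fun x => |T.rayleighQuotient x|) ⊆ bound := by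
    rintro _ ⟨x, rfl⟩
    rcases eq_or_ne x 0 with rfl | hx
    · simp only [bound, Set.mem_ofPred_eq, rayleighQuotient_apply_zero, abs_zero]
      rw [sq, zero_mul]
      exact add_nonneg (norm_nonneg _) (mul_nonneg hK (Real.sqrt_nonneg _))
    have hy : ‖‖x‖⁻¹ • x‖ = 1 := norm_smul_inv_norm hx
    have hρ : T.rayleighQuotient x = ⟪T (‖x‖⁻¹ • x), ‖x‖⁻¹ • x⟫ := by
      rw [← T.rayleigh_smul x (inv_ne_zero (norm_ne_zero_iff.mpr hx))]
      simp [rayleighQuotient, reApplyInnerSelf_apply, hy]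
    simpa only [bound, Set.mem_ofPred_eq, sq_abs, hρ] using sq_inner_sub_apply_self_le hA hB hy
  -- `bound` is closed and its defining square root vanishes at `t = ‖T‖`
  have hnorm : ‖T‖ ∈ closure (Set.range fun x => |T.rayleighQuotient x|) := by
    rw [T.norm_eq_iSup_rayleighQuotient (hA.isSymmetric.sub hB.isSymmetric)]
    exact csSup_mem_closure (Set.range_nonempty _) T.bddAbove_rayleighQuotient
  simpa [bound] using hclosed.closure_subset_iff.mpr hrange hnorm

theorem IsPositive.posSemidef_inner {ι : Type*} [Fintype ι] {R : E →L[ℝ] E} (hR : R.IsPositive)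
    (v : ι → E) : (Matrix.of fun i j => ⟪R (v i), v j⟫).PosSemidef := by
  rw [Matrix.posSemidef_iff_dotProduct_mulVec]
  refine ⟨Matrix.IsHermitian.ext fun i j => ?_, fun c => ?_⟩
  · rw [Matrix.of_apply, Matrix.of_apply, star_trivial, hR.inner_left_eq_inner_right,
      real_inner_comm]
  · convert hR.inner_nonneg_left (∑ i, c i • v i) using 1
    simp only [dotProduct, Pi.star_apply, star_trivial, Matrix.mulVec, Matrix.of_apply,
      Finset.mul_sum, map_sum, map_smul, inner_sum, sum_inner, real_inner_smul_right,
      real_inner_smul_left]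
    rw [Finset.sum_comm]
    exact Finset.sum_congr rfl fun i _ => Finset.sum_congr rfl fun j _ => by ring

theorem abs_sum_inner_mul_inner_le {ι : Type*} [Fintype ι] {v : ι → E} (hv : Orthonormal ℝ v)
    (T : E →L[ℝ] E) {R : E →L[ℝ] E} (hR : R.IsPositive) :
    |∑ i, ∑ j, ⟪T (v i), v j⟫ * ⟪R (v i), v j⟫| ≤ ‖T‖ * ∑ i, ⟪R (v i), v i⟫ := by
  classical
  obtain ⟨C, hC⟩ : ∃ C : Matrix ι ι ℝ,
      Matrix.of (fun i j => ⟪R (v i), v j⟫) = C.conjTranspose * C := by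
    open scoped MatrixOrder Matrix.Norms.L2Operator in
    exact CStarAlgebra.nonneg_iff_eq_star_mul_self.mp (hR.posSemidef_inner v).nonneg
  have hRC : ∀ i j, ⟪R (v i), v j⟫ = ∑ l, C l i * C l j := fun i j => by
    simpa [Matrix.mul_apply] using congrFun₂ hC i j
  set x : ι → E := fun l => ∑ i, C l i • v i
  have hTx : ∀ l, ⟪T (x l), x l⟫ = ∑ i, ∑ j, C l i * C l j * ⟪T (v i), v j⟫ := fun l => by
    simp only [x, map_sum, map_smul, sum_inner, inner_sum, real_inner_smul_left,
      real_inner_smul_right]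
    rw [Finset.sum_comm]
    exact Finset.sum_congr rfl fun i _ => Finset.sum_congr rfl fun j _ => by ring
  have hx : ∀ l, ‖x l‖ ^ 2 = ∑ i, C l i ^ 2 := fun l => by
    rw [← real_inner_self_eq_norm_sq, hv.inner_sum]
    simp [sq]
  calc |∑ i, ∑ j, ⟪T (v i), v j⟫ * ⟪R (v i), v j⟫| = |∑ l, ⟪T (x l), x l⟫| := by
        simp_rw [hTx, hRC, Finset.mul_sum]
        conv_lhs => enter [1, 2, i]; rw [Finset.sum_comm]
        rw [Finset.sum_comm]
        congr 1
        exact Finset.sum_congr rfl fun l _ => Finset.sum_congr rfl fun i _ =>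
          Finset.sum_congr rfl fun j _ => by ring
    _ ≤ ∑ l, ‖T‖ * ‖x l‖ ^ 2 :=
        (Finset.abs_sum_le_sum_abs _ _).trans
          (Finset.sum_le_sum fun l _ => T.abs_inner_apply_self_le _)
    _ = ‖T‖ * ∑ i, ⟪R (v i), v i⟫ := by
        simp_rw [hx, hRC, ← Finset.mul_sum, sq]
        rw [Finset.sum_comm]

end ContinuousLinearMap

namespace HilbertBasis

open Filter Topology

variable {ι : Type*} (b : HilbertBasis ι ℝ E)

theorem hasSum_inner_sq (x : E) : HasSum (fun i => ⟪x, b i⟫ ^ 2) (‖x‖ ^ 2) := by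
  simpa [sq, real_inner_comm x, real_inner_self_eq_norm_sq] using b.hasSum_inner_mul_inner x x

theorem summable_inner_apply_sq {A : E →L[ℝ] E} (hA : Summable fun i => ‖A (b i)‖ ^ 2) :
    Summable fun p : ι × ι => ⟪A (b p.1), b p.2⟫ ^ 2 := by
  refine (summable_prod_of_nonneg fun _ => sq_nonneg _).mpr ⟨fun i => ?_, ?_⟩
  · exact (b.hasSum_inner_sq (A (b i))).summable
  · exact hA.congr fun i => (b.hasSum_inner_sq (A (b i))).tsum_eq.symm

theorem abs_tsum_inner_apply_le (T : E →L[ℝ] E) {R : E →L[ℝ] E} (hR : R.IsPositive)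
    (hT : Summable fun i => ‖T (b i)‖ ^ 2) (hR₂ : Summable fun i => ‖R (b i)‖ ^ 2)
    (htr : Summable fun i => ⟪R (b i), b i⟫) :
    |∑' i, ⟪T (b i), R (b i)⟫| ≤ ‖T‖ * ∑' i, ⟪R (b i), b i⟫ := by
  set F : ι × ι → ℝ := fun p => ⟪T (b p.1), b p.2⟫ * ⟪R (b p.1), b p.2⟫
  have hF : Summable F := by
    refine Summable.of_norm_bounded (((b.summable_inner_apply_sq hT).add
      (b.summable_inner_apply_sq hR₂)).div_const 2) fun p => ?_
    have := two_mul_le_add_sq |⟪T (b p.1), b p.2⟫| |⟪R (b p.1), b p.2⟫|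
    rw [sq_abs, sq_abs] at this
    rw [Real.norm_eq_abs, abs_mul]
    linarith
  have hrows : HasSum (fun i => ⟪T (b i), R (b i)⟫) (∑' p, F p) :=
    hF.hasSum.prod_fiberwise fun i => by
      simpa only [F, real_inner_comm (b _) (R (b i))] using
        b.hasSum_inner_mul_inner (T (b i)) (R (b i))
  have hsquares : Tendsto (fun s : Finset ι => ∑ p ∈ s ×ˢ s, F p) atTop (𝓝 (∑' p, F p)) :=
    hF.hasSum.comp (tendsto_finsetProd_atTop.comp tendsto_atTop_diagonal)
  rw [hrows.tsum_eq]
  refine le_of_tendsto hsquares.abs (Eventually.of_forall fun s => ?_)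
  have hv : Orthonormal ℝ fun i : s => b i := b.orthonormal.comp _ Subtype.val_injective
  have hcorner := T.abs_sum_inner_mul_inner_le hv hR
  rw [Finset.sum_coe_sort s (fun i => ⟪R (b i), b i⟫)] at hcorner
  rw [Finset.sum_product]
  simp_rw [← Finset.sum_coe_sort s]
  exact hcorner.trans (mul_le_mul_of_nonneg_left
    (htr.sum_le_tsum _ fun i _ => hR.inner_nonneg_left _) (norm_nonneg T))

theorem norm_le_sqrt_tsum_norm_apply_sq [CompleteSpace E] {A : E →L[ℝ] E}
    (hA : Summable fun i => ‖A (b i)‖ ^ 2) : ‖A‖ ≤ √(∑' i, ‖A (b i)‖ ^ 2) := by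
  rw [← LinearIsometryEquiv.norm_map ContinuousLinearMap.adjoint A]
  refine (ContinuousLinearMap.adjoint A).opNorm_le_bound (Real.sqrt_nonneg _) fun x => ?_
  rw [mul_comm, ← Real.sqrt_sq (norm_nonneg x), ← Real.sqrt_mul (sq_nonneg _),
    Real.le_sqrt (norm_nonneg _) (by positivity), ← (b.hasSum_inner_sq _).tsum_eq,
    ← tsum_mul_left]
  refine (b.hasSum_inner_sq _).summable.tsum_le_tsum (fun i => ?_) (hA.mul_left _)
  rw [ContinuousLinearMap.adjoint_inner_left, ← mul_pow]
  exact sq_le_sq' (abs_le.mp (abs_real_inner_le_norm _ _)).1 (real_inner_le_norm _ _)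

theorem tsum_norm_sub_apply_sq_le {A B : E →L[ℝ] E} (hA : A.IsPositive)
    (hA₂ : Summable fun i => ‖A (b i)‖ ^ 2) (hB₂ : Summable fun i => ‖B (b i)‖ ^ 2)
    (htr : Summable fun i => ⟪A (b i), b i⟫) :
    ∑' i, ‖(A - B) (b i)‖ ^ 2 ≤
      |∑' i, ‖A (b i)‖ ^ 2 - ∑' i, ‖B (b i)‖ ^ 2| + 2 * ‖A - B‖ * ∑' i, ⟪A (b i), b i⟫ := by
  have hpolar : ∀ x y : E, ‖x - y‖ ^ 2 = 2 * ⟪x - y, x⟫ - ‖x‖ ^ 2 + ‖y‖ ^ 2 := fun x y => by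
    rw [norm_sub_sq_real, inner_sub_left, real_inner_self_eq_norm_sq, real_inner_comm]
    ring
  have hAB : Summable fun i => ‖(A - B) (b i)‖ ^ 2 := by
    refine .of_nonneg_of_le (fun _ => sq_nonneg _) (fun i => ?_) ((hA₂.add hB₂).mul_left 2)
    have := parallelogram_law_with_norm ℝ (A (b i)) (B (b i))
    rw [sub_apply]
    nlinarith [sq_nonneg ‖A (b i) + B (b i)‖]
  have hP : Summable fun i => ⟪(A - B) (b i), A (b i)⟫ :=
    (((hAB.add hA₂).sub hB₂).div_const 2).congr fun i => by
      simp only [sub_apply, hpolar]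
      ring
  have hsum : HasSum (fun i => ‖(A - B) (b i)‖ ^ 2)
      (2 * ∑' i, ⟪(A - B) (b i), A (b i)⟫ - ∑' i, ‖A (b i)‖ ^ 2 + ∑' i, ‖B (b i)‖ ^ 2) :=
    (((hP.hasSum.mul_left 2).sub hA₂.hasSum).add hB₂.hasSum).congr_fun fun i => by
      simp only [sub_apply, hpolar]
  have hpair := b.abs_tsum_inner_apply_le (A - B) hA hAB hA₂ htr
  rw [hsum.tsum_eq]
  linarith [neg_abs_le (∑' i, ‖A (b i)‖ ^ 2 - ∑' i, ‖B (b i)‖ ^ 2), abs_le.mp hpair]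

end HilbertBasis

theorem opHSNorm_sub_sq_le (b : HilbertBasis ℕ ℝ E) {R₁ R₂ : E →L[ℝ] E}
    (hR₁ : R₁.IsPositive) (hR₂ : R₂.IsPositive)
    (hHS₁ : Summable fun n => ‖R₁ (b n)‖ ^ 2) (hHS₂ : Summable fun n => ‖R₂ (b n)‖ ^ 2)
    (htr₁ : Summable fun n => ⟪R₁ (b n), b n⟫) (htr₂ : Summable fun n => ⟪R₂ (b n), b n⟫) :
    opHSNorm b (R₁ - R₂) ^ 2 ≤ |opTrace b (R₁ ∘L R₁) - opTrace b (R₂ ∘L R₂)| +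
      2 * ‖R₁ - R₂‖ * min (opTrace b R₁) (opTrace b R₂) := by
  have h₁ := b.tsum_norm_sub_apply_sq_le hR₁ hHS₁ hHS₂ htr₁
  have h₂ := b.tsum_norm_sub_apply_sq_le hR₂ hHS₂ hHS₁ htr₂
  simp only [sub_apply, norm_sub_rev (R₂ _), norm_sub_rev R₂,
    abs_sub_comm (∑' n, ‖R₂ (b n)‖ ^ 2)] at h₁ h₂
  rcases min_choice (opTrace b R₁) (opTrace b R₂) with h | h <;> rw [h] <;>
    simpa only [opHSNorm, opTrace, sub_apply, hR₁.inner_comp_self_apply,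
      hR₂.inner_comp_self_apply, Real.sq_sqrt (tsum_nonneg fun _ => sq_nonneg _)]

end

theorem le_sqrt_add_sqrt_of_sq_le {h a c : ℝ} (ha : 0 ≤ a) (hc : 0 ≤ c) (hh : h ^ 2 ≤ a + c) :
    h ≤ √a + √c := by
  refine abs_le_of_sq_le_sq' ?_ (by positivity) |>.2
  nlinarith [Real.sq_sqrt ha, Real.sq_sqrt hc, Real.sqrt_nonneg a, Real.sqrt_nonneg c]

theorem powers_stormer_modified_general (b : HilbertBasis ℕ ℝ H)
    (S₁ S₂ R₁ R₂ : H →L[ℝ] H)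
    (hR₁ : R₁.IsPositive) (hR₂ : R₂.IsPositive)
    (hR₁sq : R₁ ∘L R₁ = S₁) (hR₂sq : R₂ ∘L R₂ = S₂)
    (htrS₁ : Summable fun n => ⟪S₁ (b n), b n⟫)
    (htrS₂ : Summable fun n => ⟪S₂ (b n), b n⟫)
    (htrR₁ : Summable fun n => ⟪R₁ (b n), b n⟫)
    (htrR₂ : Summable fun n => ⟪R₂ (b n), b n⟫)
    (hHS : Summable fun n => ‖(S₁ - S₂) (b n)‖ ^ 2) :
    opHSNorm b (R₁ - R₂) ≤
      Real.sqrt |opTrace b S₁ - opTrace b S₂| +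
        Real.sqrt 2 * opHSNorm b (S₁ - S₂) ^ ((1 : ℝ) / 4) *
          Real.sqrt (min (opTrace b R₁) (opTrace b R₂)) := by
  subst hR₁sq hR₂sq
  simp only [hR₁.inner_comp_self_apply, hR₂.inner_comp_self_apply] at htrS₁ htrS₂
  set V := opHSNorm b (R₁ ∘L R₁ - R₂ ∘L R₂)
  have hop : ‖R₁ - R₂‖ ≤ √V := Real.le_sqrt_of_sq_le <|
    (ContinuousLinearMap.sq_norm_sub_le_norm_comp_self_sub hR₁ hR₂).trans
      (b.norm_le_sqrt_tsum_norm_apply_sq hHS)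
  have hm : 0 ≤ min (opTrace b R₁) (opTrace b R₂) :=
    le_min (tsum_nonneg fun n => hR₁.inner_nonneg_left _)
      (tsum_nonneg fun n => hR₂.inner_nonneg_left _)
  have hV0 : 0 ≤ V := Real.sqrt_nonneg _
  have hV : √√V = V ^ ((1 : ℝ) / 4) := by
    rw [Real.sqrt_eq_rpow, Real.sqrt_eq_rpow, ← Real.rpow_mul hV0]
    norm_num
  calc opHSNorm b (R₁ - R₂)
      ≤ √|opTrace b (R₁ ∘L R₁) - opTrace b (R₂ ∘L R₂)| +
          √(2 * √V * min (opTrace b R₁) (opTrace b R₂)) :=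
        le_sqrt_add_sqrt_of_sq_le (abs_nonneg _) (by positivity)
          ((opHSNorm_sub_sq_le b hR₁ hR₂ htrS₁ htrS₂ htrR₁ htrR₂).trans (by gcongr))
    _ = _ := by rw [Real.sqrt_mul (by positivity), Real.sqrt_mul zero_le_two, hV]

/-- **Modified Powers–Størmer inequality.**
For positive self-adjoint trace-class operators `S₁, S₂` on a separable Hilbert space with
positive square roots `R₁, R₂` (`Rᵢ² = Sᵢ`, so `Rᵢ = √Sᵢ`):
`‖√S₁ − √S₂‖_HS ≤ |Tr S₁ − Tr S₂|^{1/2} + √2 ‖S₁ − S₂‖_HS^{1/4} min{Tr √S₁, Tr √S₂}^{1/2}`. -/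
theorem powers_stormer_modified (b : HilbertBasis ℕ ℝ H)
    (S₁ S₂ R₁ R₂ : H →L[ℝ] H)
    (hS₁ : S₁.IsPositive) (hS₂ : S₂.IsPositive)
    (hR₁ : R₁.IsPositive) (hR₂ : R₂.IsPositive)
    (hR₁sq : R₁ ∘L R₁ = S₁) (hR₂sq : R₂ ∘L R₂ = S₂)
    (htrS₁ : Summable fun n => ⟪S₁ (b n), b n⟫)
    (htrS₂ : Summable fun n => ⟪S₂ (b n), b n⟫)
    (htrR₁ : Summable fun n => ⟪R₁ (b n), b n⟫)
    (htrR₂ : Summable fun n => ⟪R₂ (b n), b n⟫)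
    (hHS : Summable fun n => ‖(S₁ - S₂) (b n)‖ ^ 2)
    (hHSR : Summable fun n => ‖(R₁ - R₂) (b n)‖ ^ 2) :
    opHSNorm b (R₁ - R₂) ≤
      Real.sqrt |opTrace b S₁ - opTrace b S₂| +
        Real.sqrt 2 * opHSNorm b (S₁ - S₂) ^ ((1 : ℝ) / 4) *
          Real.sqrt (min (opTrace b R₁) (opTrace b R₂)) :=
  powers_stormer_modified_general b S₁ S₂ R₁ R₂ hR₁ hR₂ hR₁sq hR₂sq htrS₁ htrS₂ htrR₁ htrR₂ hHS
end
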